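/- For every bracket worm a ∈ W_() with a ≠ ⊤ and every n ∈ ℕ, a{n} ◁ a, i.e. a ⊢_BC (⊤)(a{n}). -/

import Mathlib

open Ordinal

universe u v

/-- `derivBFamily` was removed from Mathlib; restored here with its old definition. -/
noncomputable def derivBFamily (o : Ordinal.{u}) (f : ∀ b < o, Ordinal.{max u v} → Ordinal.{max u v}) :
    Ordinal.{max u v} → Ordinal.{max u v} :=
  derivFamily (familyOfBFamily o f)

/-- The binary Veblen function: `veblen 0 β = ω ^ β` and, for `α > 0`, `veblen α`
enumerates the common fixed points of the functions `veblen ξ` for `ξ < α`. -/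
noncomputable def veblen (α : Ordinal.{0}) : Ordinal.{0} → Ordinal.{0} :=
  if α = 0 then fun β => omega0 ^ β
  else derivBFamily.{0, 0} α fun ξ h => veblen ξ
termination_by α
decreasing_by exact h

/-- The Feferman–Schütte ordinal `Γ₀`: the least nonzero ordinal closed under the
binary Veblen function. -/
noncomputable def Gamma0 : Ordinal.{0} :=
  sInf {L | 0 < L ∧ ∀ α < L, ∀ β < L, _root_.veblen α β < L}

/-- Strictly positive modal formulas with modalities indexed by ordinals. -/
inductive RCF : Type 1 where
  | top : RCF
  | var : ℕ → RCF
  | and : RCF → RCF → RCF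
  | dia : Ordinal.{0} → RCF → RCF

/-- `φ.bounded Λ` holds iff all modalities occurring in `φ` are `< Λ`,
i.e. iff `φ` is an `RC_Λ`-formula. -/
def RCF.bounded (Λ : Ordinal) : RCF → Prop
  | .top => True
  | .var _ => True
  | .and φ ψ => φ.bounded Λ ∧ ψ.bounded Λ
  | .dia α φ => α < Λ ∧ φ.bounded Λ

/-- Worms: formulas built from `⊤` by prefixing modalities. -/
def RCF.isWorm : RCF → Prop
  | .top => True
  | .var _ => False
  | .and _ _ => False
  | .dia _ φ => φ.isWorm

/-- The signature of a formula: the set of ordinals occurring in its modalities. -/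
def RCF.sig : RCF → Set Ordinal
  | .top => ∅
  | .var _ => ∅
  | .and φ ψ => φ.sig ∪ ψ.sig
  | .dia α φ => insert α φ.sig

/-- Derivability in the reflection calculus `RC_Λ`. -/
inductive RCder (Λ : Ordinal) : RCF → RCF → Prop where
  | id : ∀ φ, φ.bounded Λ → RCder Λ φ φ
  | topI : ∀ φ, φ.bounded Λ → RCder Λ φ .top
  | andE₁ : ∀ φ ψ, φ.bounded Λ → ψ.bounded Λ → RCder Λ (.and φ ψ) φ
  | andE₂ : ∀ φ ψ, φ.bounded Λ → ψ.bounded Λ → RCder Λ (.and φ ψ) ψ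
  | diaTrans : ∀ α φ, α < Λ → φ.bounded Λ → RCder Λ (.dia α (.dia α φ)) (.dia α φ)
  | diaDown : ∀ α β φ, β < α → α < Λ → φ.bounded Λ → RCder Λ (.dia α φ) (.dia β φ)
  | diaConj : ∀ α β φ ψ, β < α → α < Λ → φ.bounded Λ → ψ.bounded Λ →
      RCder Λ (.and (.dia α φ) (.dia β ψ)) (.dia α (.and φ (.dia β ψ)))
  | andI : ∀ {φ ψ χ}, RCder Λ φ ψ → RCder Λ φ χ → RCder Λ φ (.and ψ χ)
  | cut : ∀ {φ ψ χ}, RCder Λ φ ψ → RCder Λ ψ χ → RCder Λ φ χ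
  | diaMono : ∀ {φ ψ} (α), α < Λ → RCder Λ φ ψ → RCder Λ (.dia α φ) (.dia α ψ)

/-- Membership in `W_{Γ₀}`: worms of `RC_{Γ₀}`. -/
def isGWorm (A : RCF) : Prop := A.isWorm ∧ A.bounded Gamma0

/-- `WormLT B A` is the consistency ordering `B <₀ A` on worms of `W_{Γ₀}`:
`A ⊢_{RC_{Γ₀}} ⟨0⟩B`. -/
def WormLT (B A : RCF) : Prop :=
  isGWorm A ∧ isGWorm B ∧ RCder Gamma0 A (.dia 0 B)

/- The order type `o A` of a worm, defined recursively by
`o A = sup_{B <₀ A} (o B + 1)` (well-defined since `<₀` is well-founded). -/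
open Classical in
noncomputable def wormO (A : RCF) : Ordinal.{0} :=
  if h : WellFounded WormLT then
    h.fix (C := fun _ => Ordinal.{0})
      (fun B ih => ⨆ C : {C : RCF // WormLT C B}, (ih C.1 C.2 + 1)) A
  else 0

/-- Bracket worms `W_()`: `⊤ ∈ W_()` and `(a)b ∈ W_()` for `a, b ∈ W_()`.
`BW.cons a b` denotes `(a)b`. -/
inductive BW : Type where
  | top : BW
  | cons : BW → BW → BW
deriving DecidableEq

/-- The translation `* : W_() → W_{Γ₀}`: `⊤* = ⊤` and `((a)b)* = ⟨o(a*)⟩ b*`. -/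
noncomputable def BW.star : BW → RCF
  | .top => .top
  | .cons a b => .dia (wormO a.star) b.star

/-- `o*(a) = o(a*)`. -/
noncomputable def ostar (a : BW) : Ordinal.{0} := wormO a.star

/-- BC-formulas `F_()`. `BCF.dia a φ` denotes `(a)φ`. -/
inductive BCF : Type where
  | top : BCF
  | var : ℕ → BCF
  | and : BCF → BCF → BCF
  | dia : BW → BCF → BCF

/-- A bracket worm regarded as a BC-formula. -/
def BW.toF : BW → BCF
  | .top => .top
  | .cons a b => .dia a b.toF

/-- Derivability in the Bracket Calculus `BC`.  The side conditions `b ⊴ a`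
(`a ⊢ (⊤)b` or `a ⊢ b`) and `b ◁ a` (`a ⊢ (⊤)b`) are inlined, the two
disjuncts of `⊴` being split into separate constructors. -/
inductive BCder : BCF → BCF → Prop where
  | id : ∀ φ, BCder φ φ
  | topI : ∀ φ, BCder φ .top
  | andE₁ : ∀ φ ψ, BCder (.and φ ψ) φ
  | andE₂ : ∀ φ ψ, BCder (.and φ ψ) ψ
  | andI : ∀ {φ ψ χ}, BCder φ ψ → BCder φ χ → BCder φ (.and ψ χ)
  | cut : ∀ {φ ψ χ}, BCder φ ψ → BCder ψ χ → BCder φ χ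
  | mono₁ : ∀ {φ ψ} (a b : BW), BCder φ ψ → BCder a.toF (.dia .top b.toF) →
      BCder (.dia a φ) (.dia b ψ)
  | mono₂ : ∀ {φ ψ} (a b : BW), BCder φ ψ → BCder a.toF b.toF →
      BCder (.dia a φ) (.dia b ψ)
  | trans₁ : ∀ {φ ψ} (a b : BW), BCder φ ψ → BCder a.toF (.dia .top b.toF) →
      BCder (.dia a (.dia b φ)) (.dia b ψ)
  | trans₂ : ∀ {φ ψ} (a b : BW), BCder φ ψ → BCder a.toF b.toF →
      BCder (.dia a (.dia b φ)) (.dia b ψ)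
  | conj : ∀ {φ ψ} (a b : BW), BCder a.toF (.dia .top b.toF) →
      BCder (.and (.dia a φ) (.dia b ψ)) (.dia a (.and φ (.dia b ψ)))

/-- `bcLT b a` is `b ◁ a`, i.e. `a ⊢_BC (⊤)b`. -/
def bcLT (b a : BW) : Prop := BCder a.toF (.dia .top b.toF)

/-- `bcLE b a` is `b ⊴ a`, i.e. `a ⊢_BC (⊤)b` or `a ⊢_BC b`. -/
def bcLE (b a : BW) : Prop := bcLT b a ∨ BCder a.toF b.toF

/-- The list `[a₁, ..., a_m]` of components of the bracket worm `(a₁)...(a_m)⊤`. -/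
def BW.toList : BW → List BW
  | .top => []
  | .cons a b => a :: b.toList

/-- The bracket worm `(a₁)...(a_m)⊤` with components `[a₁, ..., a_m]`. -/
def BW.ofList : List BW → BW
  | [] => .top
  | a :: l => .cons a (ofList l)

open Classical in
/- Fundamental sequences for bracket worms.  For `a = (a₁)(a₂)...(a_m)`:
`⊤{n} = ⊤`; if `a₁ = ⊤` then `a{n} = (a₂)...(a_m)`; otherwise, with `ℓ` least
such that `a_ℓ ◁ a₁` (and `ℓ = m + 1` if there is none),
`b = (a₁{n})(a₂)...(a_{ℓ-1})`, `c = (a_ℓ)...(a_m)`, we set `a{n} = b^{n+1} c`. -/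
noncomputable def BW.fs : BW → ℕ → BW
  | .top, _ => .top
  | .cons a₁ rest, n =>
    if a₁ = .top then rest
    else
      let L := rest.toList
      let j := if h : ∃ i, i < L.length ∧ bcLT (L.getD i .top) a₁ then Nat.find h
               else L.length
      BW.ofList ((List.replicate (n + 1) (BW.fs a₁ n :: L.take j)).flatten ++ L.drop j)
termination_by a _ => a

/-- Iterated fundamental sequences on bracket worms:
`a⟦0⟧ = a`, `a⟦n+1⟧ = a⟦n⟧{n+1}`. -/
noncomputable def BW.fsIter (a : BW) : ℕ → BW
  | 0 => a
  | n + 1 => (a.fsIter n).fs (n + 1)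

/-!
The one nontrivial ingredient is linearity: for all bracket worms `a`, `b`, either `a ◁ b` or
`b ⊴ a`. It is proved for the component lists `X`, `Y` of two worms in a form that is uniform
in a context `Θ ⊢ ψ`, where `ψ` is `⊤` or headed by a common lower bound: `(Y)Θ ⊢ (y)(X)ψ` for
every common lower bound `y`, or the same with `X`, `Y` swapped, or both `(Y)Θ ⊢ (X)ψ` and
`(X)Θ ⊢ (Y)ψ`. The induction is on size: the components are linearly ordered by the induction
hypothesis, so there is a `⊴`-least one `m`; cutting each list at its first component `⊴ m`
and comparing the (smaller) pieces settles the three cases.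

Write `a = (a₁) t c` where `c` starts at the first component `◁ a₁`, so that every component of
`t` is `⊵ a₁` by linearity, and let `x = a₁{n}`, so `x ◁ a₁` by induction. The conjunction rule
`(a₁)φ ∧ (d)ψ ⊢ (a₁)(φ ∧ (d)ψ)` for `d ◁ a₁` pushes a derived `(d)ψ` under `(a₁) t`; starting
from `a ⊢ c` this gives `a ⊢ (x t)^k c` for every `k`, each time with a head `◁ a₁`, and one more
application turns the final `(x)…` into `(⊤)(x)…`.
-/

def diaList : List BW → BCF → BCF
  | [], φ => φ
  | a :: L, φ => .dia a (diaList L φ)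

lemma diaList_append (L₁ L₂ : List BW) (φ : BCF) :
    diaList (L₁ ++ L₂) φ = diaList L₁ (diaList L₂ φ) := by
  induction L₁ with
  | nil => rfl
  | cons a L ih => simp only [List.cons_append, diaList, ih]

lemma BW.toF_eq_diaList (a : BW) : a.toF = diaList a.toList .top := by
  induction a with
  | top => rfl
  | cons a b _ ih => simp only [BW.toF, BW.toList, diaList, ih]

@[simp] lemma BW.toList_ofList (L : List BW) : (BW.ofList L).toList = L := by
  induction L with
  | nil => rfl
  | cons a L ih => simp only [BW.ofList, BW.toList, ih]

def BW.size : BW → ℕ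
  | .top => 0
  | .cons a b => a.size + b.size + 1

def listSize (L : List BW) : ℕ := (L.map fun c => c.size + 1).sum

@[simp] lemma listSize_cons (a : BW) (L : List BW) :
    listSize (a :: L) = a.size + 1 + listSize L := by
  simp [listSize]

@[simp] lemma listSize_append (L₁ L₂ : List BW) :
    listSize (L₁ ++ L₂) = listSize L₁ + listSize L₂ := by
  simp [listSize]

lemma listSize_toList (a : BW) : listSize a.toList = a.size := by
  induction a with
  | top => rfl
  | cons a b _ ih => simp [BW.toList, BW.size, ih]; omega

lemma size_lt_listSize {a : BW} {L : List BW} (ha : a ∈ L) : a.size < listSize L :=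
  List.le_sum_of_mem (List.mem_map_of_mem (f := fun c => c.size + 1) ha)

lemma size_add_size_lt_listSize {a b : BW} {L : List BW} (ha : a ∈ L) (hb : b ∈ L)
    (hab : a ≠ b) : a.size + b.size < listSize L := by
  induction L with
  | nil => simp at ha
  | cons c L ih =>
    simp only [List.mem_cons] at ha hb
    rw [listSize_cons]
    rcases ha with rfl | ha <;> rcases hb with rfl | hb
    · exact absurd rfl hab
    · have := size_lt_listSize hb; omega
    · have := size_lt_listSize ha; omega
    · have := ih ha hb; omega

lemma bcLE_refl (a : BW) : bcLE a a := Or.inr (.id _)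

lemma bcLE_top (a : BW) : bcLE .top a := Or.inr (.topI _)

lemma bcLE_of_bcLT {a b : BW} (h : bcLT a b) : bcLE a b := Or.inl h

lemma BCder.dia_mono {a b : BW} {φ ψ : BCF} (hba : bcLE b a) (h : BCder φ ψ) :
    BCder (.dia a φ) (.dia b ψ) :=
  hba.elim (.mono₁ a b h) (.mono₂ a b h)

lemma BCder.dia_dia {a b : BW} {φ ψ : BCF} (hba : bcLE b a) (h : BCder φ ψ) :
    BCder (.dia a (.dia b φ)) (.dia b ψ) :=
  hba.elim (.trans₁ a b h) (.trans₂ a b h)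

lemma BCder.dia_top_dia_top {φ : BCF} : BCder (.dia .top (.dia .top φ)) (.dia .top φ) :=
  .dia_dia (bcLE_refl _) (.id _)

lemma bcLT_of_bcLT_of_bcLE {a b c : BW} (hab : bcLT a b) (hbc : bcLE b c) : bcLT a c :=
  hbc.elim (fun h => (h.cut (.dia_mono (bcLE_refl _) hab)).cut .dia_top_dia_top) (·.cut hab)

lemma bcLT_of_bcLE_of_bcLT {a b c : BW} (hab : bcLE a b) (hbc : bcLT b c) : bcLT a c :=
  hab.elim (fun h => (hbc.cut (.dia_mono (bcLE_refl _) h)).cut .dia_top_dia_top)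
    (fun h => hbc.cut (.dia_mono (bcLE_refl _) h))

lemma bcLE_trans {a b c : BW} (hab : bcLE a b) (hbc : bcLE b c) : bcLE a c :=
  hbc.elim (fun h => bcLE_of_bcLT (bcLT_of_bcLE_of_bcLT hab h))
    (fun h => hab.elim (fun h' => Or.inl (h.cut h')) (fun h' => Or.inr (h.cut h')))

lemma BCder.dia_and_dia {Γ φ ψ : BCF} {a b : BW} (h₁ : BCder Γ (.dia a φ))
    (h₂ : BCder Γ (.dia b ψ)) (hba : bcLT b a) : BCder Γ (.dia a (.and φ (.dia b ψ))) :=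
  (h₁.andI h₂).cut (.conj a b hba)

lemma BCder.dia_top_of_bcLT {a b : BW} {φ ψ : BCF} (h : BCder (.dia a φ) (.dia b ψ))
    (hba : bcLT b a) : BCder (.dia a φ) (.dia .top (.dia b ψ)) :=
  ((BCder.id _).dia_and_dia h hba).cut (.dia_mono (bcLE_top a) (.andE₂ _ _))

lemma BCder.diaList_mono {φ ψ : BCF} (h : BCder φ ψ) (L : List BW) :
    BCder (diaList L φ) (diaList L ψ) := by
  induction L with
  | nil => exact h
  | cons a L ih => exact .dia_mono (bcLE_refl a) ih

lemma BCder.diaList_and_dia {L : List BW} {b : BW} {Γ φ ψ : BCF}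
    (h₁ : BCder Γ (diaList L φ)) (h₂ : BCder Γ (.dia b ψ)) (hb : ∀ c ∈ L, bcLT b c) :
    BCder Γ (diaList L (.and φ (.dia b ψ))) := by
  induction L generalizing Γ with
  | nil => exact h₁.andI h₂
  | cons a L ih =>
    have hL := ih (.andE₁ _ _) (.andE₂ _ _) fun c hc => hb c (List.mem_cons_of_mem a hc)
    exact (h₁.dia_and_dia h₂ (hb a List.mem_cons_self)).cut (.dia_mono (bcLE_refl a) hL)

def LowerBound (y : BW) (L : List BW) : Prop := ∀ c ∈ L, bcLE y c

lemma LowerBound.mono {y : BW} {L L' : List BW} (h : LowerBound y L) (hsub : L' ⊆ L) :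
    LowerBound y L' :=
  fun c hc => h c (hsub hc)

lemma BCder.diaList_dia {L : List BW} {y : BW} {φ ψ : BCF} (hy : LowerBound y L)
    (h : BCder φ (.dia y ψ)) : BCder (diaList L φ) (.dia y ψ) := by
  induction L with
  | nil => exact h
  | cons a L ih =>
    have hL := ih fun c hc => hy c (List.mem_cons_of_mem a hc)
    exact (BCder.dia_mono (bcLE_refl a) hL).cut (.dia_dia (hy a List.mem_cons_self) (.id _))

lemma BCder.diaList_dia_of_ne_nil {L : List BW} {y : BW} {φ ψ : BCF} (hL : L ≠ [])
    (hy : LowerBound y L) (h : BCder φ ψ) : BCder (diaList L φ) (.dia y ψ) := by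
  obtain ⟨L, b, rfl⟩ := (L.eq_nil_or_concat).resolve_left hL
  rw [List.concat_eq_append] at hy ⊢
  rw [diaList_append]
  exact .diaList_dia (hy.mono (List.subset_append_left _ _)) (.dia_mono (hy b (by simp)) h)

def Guarded (ψ : BCF) (L : List BW) : Prop := ψ = .top ∨ ∃ w χ, ψ = .dia w χ ∧ LowerBound w L

lemma Guarded.mono {ψ : BCF} {L L' : List BW} (h : Guarded ψ L) (hsub : L' ⊆ L) :
    Guarded ψ L' :=
  h.imp_right fun ⟨w, χ, hψ, hw⟩ => ⟨w, χ, hψ, hw.mono hsub⟩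

lemma BCder.diaList_of_guarded {L : List BW} {φ ψ : BCF} (hψ : Guarded ψ L) (h : BCder φ ψ) :
    BCder (diaList L φ) ψ := by
  rcases hψ with rfl | ⟨w, χ, rfl, hw⟩
  · exact .topI _
  · exact .diaList_dia hw h

def StrongBcLT (X Y : List BW) : Prop :=
  ∀ (y : BW) (Θ ψ : BCF), LowerBound y (X ++ Y) → Guarded ψ (X ++ Y) → BCder Θ ψ →
    BCder (diaList Y Θ) (.dia y (diaList X ψ))

def StrongBcLE (X Y : List BW) : Prop :=
  ∀ Θ ψ : BCF, Guarded ψ (X ++ Y) → BCder Θ ψ → BCder (diaList Y Θ) (diaList X ψ)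

def StrongBcEquiv (X Y : List BW) : Prop := StrongBcLE X Y ∧ StrongBcLE Y X

def StrongBcTrichotomy (X Y : List BW) : Prop :=
  StrongBcLT X Y ∨ StrongBcLT Y X ∨ StrongBcEquiv X Y

lemma StrongBcTrichotomy.symm {X Y : List BW} (h : StrongBcTrichotomy X Y) : StrongBcTrichotomy Y X :=
  h.elim (fun h => Or.inr (Or.inl h)) (·.elim Or.inl fun h => Or.inr (Or.inr h.symm))

lemma StrongBcLT.bcLT {a b : BW} (h : StrongBcLT a.toList b.toList) : bcLT a b := by
  have := h .top .top .top (fun c _ => bcLE_top c) (Or.inl rfl) (.id _)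
  show BCder b.toF (.dia .top a.toF)
  rwa [BW.toF_eq_diaList, BW.toF_eq_diaList]

lemma StrongBcLE.bcLE {a b : BW} (h : StrongBcLE a.toList b.toList) : bcLE a b := by
  have := h .top .top (Or.inl rfl) (.id _)
  exact Or.inr (by rwa [BW.toF_eq_diaList, BW.toF_eq_diaList])

lemma StrongBcTrichotomy.bcLT_or_bcLE {a b : BW} (h : StrongBcTrichotomy a.toList b.toList) :
    bcLT a b ∨ bcLE b a := by
  rcases h with h | h | h
  · exact Or.inl h.bcLT
  · exact Or.inr (bcLE_of_bcLT h.bcLT)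
  · exact Or.inr h.2.bcLE

lemma strongBcLT_nil {Y : List BW} (hY : Y ≠ []) : StrongBcLT [] Y :=
  fun _ _ _ hy _ h => .diaList_dia_of_ne_nil hY hy h

lemma strongBcEquiv_nil : StrongBcEquiv [] [] := ⟨fun _ _ _ h => h, fun _ _ _ h => h⟩

lemma StrongBcLT.append_left {X T : List BW} (h : StrongBcLT X T) (P : List BW) :
    StrongBcLT X (P ++ T) := by
  intro y Θ ψ hy hψ hΘ
  rw [diaList_append]
  exact .diaList_dia (hy.mono (by intro c; simp; tauto))
    (h y Θ ψ (hy.mono (by intro c; simp; tauto)) (hψ.mono (by intro c; simp; tauto)) hΘ)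

lemma StrongBcLE.strongBcLT_append_left {X T P : List BW} (h : StrongBcLE X T) (hP : P ≠ []) :
    StrongBcLT X (P ++ T) := by
  intro y Θ ψ hy hψ hΘ
  rw [diaList_append]
  exact .diaList_dia_of_ne_nil hP (hy.mono (by intro c; simp; tauto))
    (h Θ ψ (hψ.mono (by intro c; simp; tauto)) hΘ)

lemma StrongBcLT.append_right {X A : List BW} (h : StrongBcLT X A) (R : List BW) :
    StrongBcLT X (A ++ R) := by
  intro y Θ ψ hy hψ hΘ
  rw [diaList_append]
  exact h y _ ψ (hy.mono (by intro c; simp; tauto)) (hψ.mono (by intro c; simp; tauto))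
    (.diaList_of_guarded (hψ.mono (by intro c; simp; tauto)) hΘ)

lemma StrongBcLE.append_right {X A : List BW} (h : StrongBcLE X A) (R : List BW) :
    StrongBcLE X (A ++ R) := by
  intro Θ ψ hψ hΘ
  rw [diaList_append]
  exact h _ ψ (hψ.mono (by intro c; simp; tauto))
    (.diaList_of_guarded (hψ.mono (by intro c; simp; tauto)) hΘ)

lemma BCder.diaList_append_and {C R : List BW} {x : BW} {Θ χ : BCF}
    (h : BCder (diaList (C ++ R) Θ) (.dia x χ)) (hx : ∀ c ∈ C, bcLT x c) :
    BCder (diaList (C ++ R) Θ) (diaList C (.and (diaList R Θ) (.dia x χ))) :=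
  .diaList_and_dia (by rw [diaList_append]; exact .id _) h hx

lemma strongBcLT_of_split {A T C R : List BW} {x : BW} (hTV : StrongBcLT T (C ++ R))
    (hAC : StrongBcLT A C) (hx : LowerBound x (A ++ x :: T ++ (C ++ R)))
    (hxC : ∀ c ∈ C, bcLT x c) : StrongBcLT (A ++ x :: T) (C ++ R) := by
  intro y Θ ψ hy hψ hΘ
  have hT := hTV x Θ ψ (hx.mono (by intro c; simp; tauto)) (hψ.mono (by intro c; simp; tauto)) hΘ
  have hA := hAC y _ _ (hy.mono (by intro c; simp; tauto))
    (Or.inr ⟨x, diaList T ψ, rfl, hx.mono (by intro c; simp; tauto)⟩) (.andE₂ (diaList R Θ) _)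
  rw [diaList_append A]
  exact (hT.diaList_append_and hxC).cut hA

lemma strongBcLE_of_split {A T C R : List BW} {x : BW} (hTV : StrongBcLT T (C ++ R))
    (hAC : StrongBcLE A C) (hx : LowerBound x (A ++ x :: T ++ (C ++ R)))
    (hxC : ∀ c ∈ C, bcLT x c) : StrongBcLE (A ++ x :: T) (C ++ R) := by
  intro Θ ψ hψ hΘ
  have hT := hTV x Θ ψ (hx.mono (by intro c; simp; tauto)) (hψ.mono (by intro c; simp; tauto)) hΘ
  have hA := hAC _ _ (Or.inr ⟨x, diaList T ψ, rfl, hx.mono (by intro c; simp; tauto)⟩)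
    (.andE₂ (diaList R Θ) _)
  rw [diaList_append A]
  exact (hT.diaList_append_and hxC).cut hA

lemma StrongBcTrichotomy.of_split_high {A T V : List BW} {x : BW}
    (hTV : StrongBcTrichotomy T V) (hAV : StrongBcTrichotomy A V)
    (hx : LowerBound x (A ++ x :: T ++ V)) (hxV : ∀ c ∈ V, bcLT x c) :
    StrongBcTrichotomy (A ++ x :: T) V := by
  rcases hTV with hTV | hVT | hTV
  · rw [← List.append_nil V] at hTV hx
    rcases hAV with hAV | hVA | hAV
    · exact Or.inl (List.append_nil V ▸ strongBcLT_of_split hTV hAV hx hxV)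
    · exact Or.inr (Or.inl (hVA.append_right _))
    · exact Or.inr (Or.inr
        ⟨List.append_nil V ▸ strongBcLE_of_split hTV hAV.1 hx hxV, hAV.2.append_right _⟩)
  · exact Or.inr (Or.inl (List.append_cons A x T ▸ hVT.append_left _))
  · exact Or.inr (Or.inl (List.append_cons A x T ▸ hTV.2.strongBcLT_append_left (by simp)))

lemma StrongBcTrichotomy.of_split_split {A T C W : List BW} {x y : BW}
    (hTV : StrongBcTrichotomy T (C ++ y :: W)) (hWU : StrongBcTrichotomy W (A ++ x :: T))
    (hAC : StrongBcTrichotomy A C)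
    (hx : LowerBound x (A ++ x :: T ++ (C ++ y :: W)))
    (hy : LowerBound y (C ++ y :: W ++ (A ++ x :: T)))
    (hxC : ∀ c ∈ C, bcLT x c) (hyA : ∀ a ∈ A, bcLT y a) :
    StrongBcTrichotomy (A ++ x :: T) (C ++ y :: W) := by
  rcases hTV with hTV | hVT | hTV
  · rcases hWU with hWU | hUW | hWU
    · rcases hAC with hAC | hCA | hAC
      · exact Or.inl (strongBcLT_of_split hTV hAC hx hxC)
      · exact Or.inr (Or.inl (strongBcLT_of_split hWU hCA hy hyA))
      · exact Or.inr (Or.inr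
          ⟨strongBcLE_of_split hTV hAC.1 hx hxC, strongBcLE_of_split hWU hAC.2 hy hyA⟩)
    · exact Or.inl (List.append_cons C y W ▸ hUW.append_left _)
    · exact Or.inl (List.append_cons C y W ▸ hWU.2.strongBcLT_append_left (by simp))
  · exact Or.inr (Or.inl (List.append_cons A x T ▸ hVT.append_left _))
  · exact Or.inr (Or.inl (List.append_cons A x T ▸ hTV.2.strongBcLT_append_left (by simp)))

lemma exists_mem_lowerBound {L : List BW} (hL : L ≠ [])
    (htot : ∀ a ∈ L, ∀ b ∈ L, bcLE a b ∨ bcLE b a) : ∃ m ∈ L, LowerBound m L := by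
  induction L with
  | nil => exact absurd rfl hL
  | cons a L ih =>
    rcases eq_or_ne L [] with rfl | hL'
    · exact ⟨a, List.mem_singleton_self a, by simpa [LowerBound] using bcLE_refl a⟩
    obtain ⟨m, hm, hmL⟩ := ih hL' fun b hb c hc =>
      htot b (List.mem_cons_of_mem a hb) c (List.mem_cons_of_mem a hc)
    rcases htot a List.mem_cons_self m (List.mem_cons_of_mem a hm) with ham | hma
    · refine ⟨a, List.mem_cons_self, ?_⟩
      simpa [LowerBound] using ⟨bcLE_refl a, fun c hc => bcLE_trans ham (hmL c hc)⟩
    · refine ⟨m, List.mem_cons_of_mem a hm, ?_⟩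
      simpa [LowerBound] using ⟨hma, hmL⟩

lemma List.forall_not_or_exists_append_cons {α : Type*} (p : α → Prop) (L : List α) :
    (∀ c ∈ L, ¬ p c) ∨ ∃ A x T, L = A ++ x :: T ∧ (∀ a ∈ A, ¬ p a) ∧ p x := by
  classical
  cases h : L.find? (fun c => decide (p c)) with
  | none => exact Or.inl (by simpa using List.find?_eq_none.1 h)
  | some x =>
    obtain ⟨hx, A, T, rfl, hA⟩ := List.find?_eq_some_iff_append.1 h
    exact Or.inr ⟨A, x, T, rfl, by simpa using hA, by simpa using hx⟩

lemma bcLT_or_bcLE_of_mem {U V : List BW}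
    (ih : ∀ X Y, listSize X + listSize Y < listSize U + listSize V → StrongBcTrichotomy X Y)
    {a b : BW} (ha : a ∈ U ++ V) (hb : b ∈ U ++ V) : bcLT a b ∨ bcLE b a := by
  rcases eq_or_ne a b with rfl | hab
  · exact Or.inr (bcLE_refl a)
  refine (ih _ _ ?_).bcLT_or_bcLE
  rw [listSize_toList, listSize_toList, ← listSize_append]
  exact size_add_size_lt_listSize ha hb hab

lemma StrongBcTrichotomy.of_lt_listSize {U V : List BW}
    (ih : ∀ X Y, listSize X + listSize Y < listSize U + listSize V → StrongBcTrichotomy X Y) :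
    StrongBcTrichotomy U V := by
  rcases eq_or_ne U [] with rfl | hU <;> rcases eq_or_ne V [] with rfl | hV
  · exact Or.inr (Or.inr strongBcEquiv_nil)
  · exact Or.inl (strongBcLT_nil hV)
  · exact Or.inr (Or.inl (strongBcLT_nil hU))
  have hlin := @bcLT_or_bcLE_of_mem U V ih
  obtain ⟨m, hm, hmin⟩ := exists_mem_lowerBound (by simp [hU]) fun a ha b hb =>
    (hlin ha hb).imp_left bcLE_of_bcLT
  have hhigh : ∀ c ∈ U ++ V, ¬ bcLE c m → bcLT m c :=
    fun c hc h => (hlin hm hc).resolve_right h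
  have hlow : ∀ {x}, bcLE x m → LowerBound x (U ++ V) :=
    fun hx c hc => bcLE_trans hx (hmin c hc)
  rcases List.forall_not_or_exists_append_cons (bcLE · m) U with hUm | ⟨A, x, T, rfl, hA, hx⟩ <;>
    rcases List.forall_not_or_exists_append_cons (bcLE · m) V with hVm | ⟨C, y, W, rfl, hC, hy⟩
  · rcases List.mem_append.1 hm with h | h
    · exact (hUm m h (bcLE_refl m)).elim
    · exact (hVm m h (bcLE_refl m)).elim
  · refine .symm (.of_split_high (ih _ _ ?_) (ih _ _ ?_) ((hlow hy).mono ?_)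
      fun c hc => bcLT_of_bcLE_of_bcLT hy (hhigh c ?_ (hUm c hc)))
    · simp only [listSize_append, listSize_cons]; omega
    · simp only [listSize_append, listSize_cons]; omega
    · intro c; simp; tauto
    · simp [hc]
  · refine .of_split_high (ih _ _ ?_) (ih _ _ ?_) (hlow hx)
      fun c hc => bcLT_of_bcLE_of_bcLT hx (hhigh c ?_ (hVm c hc))
    · simp only [listSize_append, listSize_cons]; omega
    · simp only [listSize_append, listSize_cons]; omega
    · simp [hc]
  · refine .of_split_split (ih _ _ ?_) (ih _ _ ?_) (ih _ _ ?_) (hlow hx) ((hlow hy).mono ?_)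
      (fun c hc => bcLT_of_bcLE_of_bcLT hx (hhigh c ?_ (hC c hc)))
      (fun a ha => bcLT_of_bcLE_of_bcLT hy (hhigh a ?_ (hA a ha)))
    · simp only [listSize_append, listSize_cons]; omega
    · simp only [listSize_append, listSize_cons]; omega
    · simp only [listSize_append, listSize_cons]; omega
    · intro c; simp; tauto
    · simp [hc]
    · simp [ha]

theorem strongBcTrichotomy (U V : List BW) : StrongBcTrichotomy U V := by
  induction hn : listSize U + listSize V using Nat.strong_induction_on generalizing U V with
  | _ n ih => exact .of_lt_listSize fun X Y h => ih _ (hn ▸ h) X Y rfl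

theorem bcLT_or_bcLE (a b : BW) : bcLT a b ∨ bcLE b a :=
  (strongBcTrichotomy a.toList b.toList).bcLT_or_bcLE

section FundamentalSequence

lemma BW.fs_cons_of_ne_top {a₁ rest : BW} (h : a₁ ≠ .top) (n : ℕ) :
    ∃ t c, rest.toList = t ++ c ∧ (∀ p ∈ t, ¬ bcLT p a₁) ∧ (∀ d ∈ c.head?, bcLT d a₁) ∧
      (BW.cons a₁ rest).fs n =
        BW.ofList ((List.replicate (n + 1) (a₁.fs n :: t)).flatten ++ c) := by
  classical
  rw [BW.fs, if_neg h]
  dsimp only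
  split
  · next hex =>
    refine ⟨_, _, (List.take_append_drop (Nat.find hex) rest.toList).symm, ?_, ?_, rfl⟩
    · intro p hp hlt
      obtain ⟨i, hi, rfl⟩ := List.getElem_of_mem hp
      rw [List.length_take] at hi
      refine Nat.find_min hex (lt_min_iff.1 hi).1 ⟨(lt_min_iff.1 hi).2, ?_⟩
      rw [List.getD_eq_getElem _ _ (lt_min_iff.1 hi).2]
      simpa using hlt
    · intro d hd
      obtain ⟨hj, hlt⟩ := Nat.find_spec hex
      rw [List.head?_drop, List.getElem?_eq_getElem hj, Option.mem_some_iff] at hd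
      rwa [List.getD_eq_getElem _ _ hj, hd] at hlt
  · next hnex =>
    refine ⟨rest.toList, [], (List.append_nil _).symm, ?_, by simp, by simp⟩
    intro p hp hlt
    obtain ⟨i, hi, rfl⟩ := List.getElem_of_mem hp
    exact hnex ⟨i, hi, by rwa [List.getD_eq_getElem _ _ hi]⟩

variable {a₁ x : BW} {t c : List BW}

lemma BCder.dia_append_of_head_bcLT {L : List BW} (hx : bcLT x a₁) (ht : ∀ p ∈ t, bcLE a₁ p)
    (hL : BCder (.dia a₁ (diaList (t ++ c) .top)) (diaList L .top))
    (hLa₁ : ∀ d ∈ L.head?, bcLT d a₁) :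
    BCder (.dia a₁ (diaList (t ++ c) .top)) (.dia x (diaList (t ++ L) .top)) := by
  have h : BCder (.dia a₁ (diaList (t ++ c) .top)) (.dia a₁ (diaList (t ++ L) .top)) := by
    rw [diaList_append, diaList_append]
    cases L with
    | nil => exact .dia_mono (bcLE_refl a₁) (.diaList_mono (.topI _) t)
    | cons d L =>
      have hd : bcLT d a₁ := hLa₁ d rfl
      have hdt : ∀ p ∈ a₁ :: t, bcLT d p := by
        simpa using ⟨hd, fun p hp => bcLT_of_bcLT_of_bcLE hd (ht p hp)⟩
      rw [diaList_append] at hL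
      exact (BCder.diaList_and_dia (L := a₁ :: t) (.id _) hL hdt).cut
        (.diaList_mono (.andE₂ _ _) (a₁ :: t))
  exact h.cut (.dia_mono (bcLE_of_bcLT hx) (.id _))

lemma BCder.diaList_replicate_append (hx : bcLT x a₁) (ht : ∀ p ∈ t, bcLE a₁ p)
    (hc : ∀ d ∈ c.head?, bcLT d a₁) (k : ℕ) :
    BCder (.dia a₁ (diaList (t ++ c) .top))
        (diaList ((List.replicate k (x :: t)).flatten ++ c) .top) ∧
      ∀ d ∈ ((List.replicate k (x :: t)).flatten ++ c).head?, bcLT d a₁ := by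
  induction k with
  | zero =>
    refine ⟨?_, hc⟩
    rw [diaList_append]
    refine BCder.diaList_of_guarded (L := a₁ :: t) ?_ (.id _)
    cases c with
    | nil => exact Or.inl rfl
    | cons d c =>
      have hd : bcLT d a₁ := hc d rfl
      exact Or.inr ⟨d, _, rfl, by
        simpa [LowerBound] using ⟨bcLE_of_bcLT hd, fun p hp => bcLE_of_bcLT
          (bcLT_of_bcLT_of_bcLE hd (ht p hp))⟩⟩
  | succ k ih =>
    rw [List.replicate_succ, List.flatten_cons, List.append_assoc, List.cons_append]
    exact ⟨.dia_append_of_head_bcLT hx ht ih.1 ih.2, by simpa using hx⟩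

lemma ofList_replicate_append_bcLT_cons {rest : BW} (hrest : rest.toList = t ++ c)
    (hx : bcLT x a₁) (ht : ∀ p ∈ t, bcLE a₁ p) (hc : ∀ d ∈ c.head?, bcLT d a₁) (n : ℕ) :
    bcLT (BW.ofList ((List.replicate (n + 1) (x :: t)).flatten ++ c)) (.cons a₁ rest) := by
  have hn := BCder.diaList_replicate_append hx ht hc n
  have := (BCder.dia_append_of_head_bcLT hx ht hn.1 hn.2).dia_top_of_bcLT hx
  rw [bcLT, BW.toF_eq_diaList, BW.toF_eq_diaList, BW.toList_ofList, List.replicate_succ,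
    List.flatten_cons, List.append_assoc, List.cons_append]
  simpa [BW.toList, diaList, hrest] using this

end FundamentalSequence

/-- For every bracket worm `a ≠ ⊤` and every `n`, `a{n} ◁ a`,
i.e. `a ⊢_BC (⊤)(a{n})`. -/
theorem fs_lt (a : BW) (n : ℕ) (h : a ≠ .top) : bcLT (a.fs n) a := by
  induction a with
  | top => exact absurd rfl h
  | cons a₁ rest ih _ =>
    by_cases h₁ : a₁ = .top
    · subst h₁
      rw [BW.fs, if_pos rfl]
      exact .id _
    obtain ⟨t, c, hrest, ht, hc, hfs⟩ := BW.fs_cons_of_ne_top h₁ n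
    have ht' : ∀ p ∈ t, bcLE a₁ p := fun p hp => (bcLT_or_bcLE p a₁).resolve_left (ht p hp)
    rw [hfs]
    exact ofList_replicate_append_bcLT_cons hrest (ih h₁) ht' hc n
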